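/- arXiv:1901.10625 — 2 statements merged into one kernel-verified Lean document; each statement's English description precedes it below -/
import Mathlib

section
/- (Lemma 2.1(v), second part) Given two admissible 1D primitive states U⁻ and U⁺ with the HLLC wave speeds s⁻ = min(s_min(U⁻), s_min(U⁺)) and s⁺ = max(s_max(U⁻), s_max(U⁺)), if s* ∈ (-1,1) satisfies the contact-discontinuity relation (1 - s⁺s*)(s*A⁻ - B⁻) = (1 - s⁻s*)(s*A⁺ - B⁺), then s⁻ < s* < s⁺. -/
noncomputable section

namespace SRHD1D

/-- Lorentz factor `γ = (1 - u²)^(-1/2)`. -/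
def lorentz (u : ℝ) : ℝ := 1 / Real.sqrt (1 - u ^ 2)

/-- Specific enthalpy `h = 1 + Γ p / ((Γ - 1) ρ)` of a perfect gas. -/
def enthalpy (G r p : ℝ) : ℝ := 1 + G * p / ((G - 1) * r)

/-- Sound speed `c_s = √(Γ p / (ρ h))`. -/
def soundSpeed (G r p : ℝ) : ℝ := Real.sqrt (G * p / (r * enthalpy G r p))

/-- Conserved rest-mass density `D = ρ γ`. -/
def Dc (r u : ℝ) : ℝ := r * lorentz u

/-- Conserved momentum `m = ρ h γ² u`. -/
def mc (G r u p : ℝ) : ℝ := r * enthalpy G r p * lorentz u ^ 2 * u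

/-- Conserved total energy `E = ρ h γ² - p`. -/
def Ec (G r u p : ℝ) : ℝ := r * enthalpy G r p * lorentz u ^ 2 - p

/-- Minimum characteristic speed `s_min = (u - c_s)/(1 - c_s u)`. -/
def sMin (G r u p : ℝ) : ℝ := (u - soundSpeed G r p) / (1 - soundSpeed G r p * u)

/-- Maximum characteristic speed `s_max = (u + c_s)/(1 + c_s u)`. -/
def sMax (G r u p : ℝ) : ℝ := (u + soundSpeed G r p) / (1 + soundSpeed G r p * u)


/-! Writing `W = ρ h γ²`, the HLLC residual is `s* A - B = W (s - u) (s* - u) + p (1 - s s*)`,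
symmetric and affine in each of the two speeds. It is positive when both speeds lie on the same
side of `u`, and negative when one lies left of the fan `[s_min, s_max]` of the state and the other
right of it: on the fan itself this is `Γ > 1 + c_s²`, and the slopes `W (s_max - u) > p`,
`W (u - s_min) > p` carry it outwards. If `s* ≤ s⁻`, the residual of `U⁻` is therefore positive and
that of `U⁺` negative, while both factors `1 - s^± s*` are positive, contradicting the contact
relation; `s* ≥ s⁺` is symmetric. -/

def inertia (G r u p : ℝ) : ℝ := r * enthalpy G r p * lorentz u ^ 2

/-- `s* A - B` at `s* = t` for a state whose outer HLLC wave has speed `s`. -/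
def contactResidual (G r u p s t : ℝ) : ℝ :=
  t * (s * Ec G r u p - mc G r u p) - (mc G r u p * (s - u) - p)

lemma one_sub_mul_pos {a b : ℝ} (ha : |a| < 1) (hb : |b| < 1) : 0 < 1 - a * b := by
  have : |a * b| < 1 := by
    rw [abs_mul]; exact mul_lt_one_of_nonneg_of_lt_one_left (abs_nonneg a) ha hb.le
  linarith [le_abs_self (a * b)]

lemma one_add_mul_pos {a b : ℝ} (ha : |a| < 1) (hb : |b| < 1) : 0 < 1 + a * b := by
  simpa using one_sub_mul_pos (a := -a) (by rwa [abs_neg]) hb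

section

variable {G r u p : ℝ}

lemma one_lt_enthalpy (hG : 1 < G) (hr : 0 < r) (hp : 0 < p) : 1 < enthalpy G r p := by
  have hG' : 0 < G - 1 := sub_pos.2 hG
  exact lt_add_of_pos_right 1 (by positivity)

lemma sub_one_mul_mul_enthalpy (hG : 1 < G) (hr : 0 < r) :
    (G - 1) * (r * enthalpy G r p) = (G - 1) * r + G * p := by
  have hG' : G - 1 ≠ 0 := (sub_pos.2 hG).ne'
  unfold enthalpy
  field_simp

lemma mul_enthalpy_pos (hG : 1 < G) (hr : 0 < r) (hp : 0 < p) : 0 < r * enthalpy G r p :=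
  mul_pos hr (one_pos.trans (one_lt_enthalpy hG hr hp))

lemma soundSpeed_pos (hG : 1 < G) (hr : 0 < r) (hp : 0 < p) : 0 < soundSpeed G r p :=
  Real.sqrt_pos.2 (div_pos (by positivity) (mul_enthalpy_pos hG hr hp))

lemma soundSpeed_sq_mul (hG : 1 < G) (hr : 0 < r) (hp : 0 < p) :
    soundSpeed G r p ^ 2 * (r * enthalpy G r p) = G * p := by
  have hrh := mul_enthalpy_pos hG hr hp
  rw [soundSpeed, Real.sq_sqrt (by positivity), div_mul_cancel₀ _ hrh.ne']

lemma soundSpeed_sq_lt (hG : 1 < G) (hr : 0 < r) (hp : 0 < p) :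
    soundSpeed G r p ^ 2 < G - 1 := by
  refine lt_of_mul_lt_mul_right ?_ (mul_enthalpy_pos hG hr hp).le
  rw [soundSpeed_sq_mul hG hr hp, sub_one_mul_mul_enthalpy hG hr]
  linarith [mul_pos (sub_pos.2 hG) hr]

lemma soundSpeed_lt_one (hG₁ : 1 < G) (hG₂ : G ≤ 2) (hr : 0 < r) (hp : 0 < p) :
    soundSpeed G r p < 1 :=
  (sq_lt_one_iff₀ (soundSpeed_pos hG₁ hr hp).le).1 (by linarith [soundSpeed_sq_lt hG₁ hr hp])

lemma abs_soundSpeed_lt_one (hG₁ : 1 < G) (hG₂ : G ≤ 2) (hr : 0 < r) (hp : 0 < p) :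
    |soundSpeed G r p| < 1 := by
  rw [abs_of_pos (soundSpeed_pos hG₁ hr hp)]; exact soundSpeed_lt_one hG₁ hG₂ hr hp

lemma one_sub_sq_pos (hu : |u| < 1) : 0 < 1 - u ^ 2 :=
  sub_pos.2 ((sq_lt_one_iff_abs_lt_one u).2 hu)

lemma inertia_neg : inertia G r (-u) p = inertia G r u p := by
  simp [inertia, lorentz]

lemma inertia_mul_one_sub_sq (hu : |u| < 1) :
    inertia G r u p * (1 - u ^ 2) = r * enthalpy G r p := by
  have hv := one_sub_sq_pos hu
  rw [inertia, lorentz, div_pow, one_pow, Real.sq_sqrt hv.le]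
  field_simp

lemma inertia_pos (hG : 1 < G) (hr : 0 < r) (hp : 0 < p) (hu : |u| < 1) :
    0 < inertia G r u p :=
  pos_of_mul_pos_left ((inertia_mul_one_sub_sq hu).symm ▸ mul_enthalpy_pos hG hr hp)
    (one_sub_sq_pos hu).le

lemma sMin_eq_neg_sMax_neg : sMin G r u p = -sMax G r (-u) p := by
  rw [sMin, sMax, ← neg_div]
  congr 1 <;> ring

lemma sMax_sub (hc : 1 + soundSpeed G r p * u ≠ 0) :
    sMax G r u p - u = soundSpeed G r p * (1 - u ^ 2) / (1 + soundSpeed G r p * u) := by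
  rw [sMax, div_sub' hc]
  ring_nf

lemma one_sub_sMax (hc : 1 + soundSpeed G r p * u ≠ 0) :
    1 - sMax G r u p = (1 - soundSpeed G r p) * (1 - u) / (1 + soundSpeed G r p * u) := by
  rw [sMax, sub_div' hc]
  ring_nf

lemma lt_sMax (hG₁ : 1 < G) (hG₂ : G ≤ 2) (hr : 0 < r) (hp : 0 < p) (hu : |u| < 1) :
    u < sMax G r u p := by
  have hc := soundSpeed_pos hG₁ hr hp
  have hd := one_add_mul_pos (abs_soundSpeed_lt_one hG₁ hG₂ hr hp) hu
  have hv := one_sub_sq_pos hu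
  have : 0 < sMax G r u p - u := by rw [sMax_sub hd.ne']; positivity
  linarith

lemma sMax_lt_one (hG₁ : 1 < G) (hG₂ : G ≤ 2) (hr : 0 < r) (hp : 0 < p) (hu : |u| < 1) :
    sMax G r u p < 1 := by
  have hc := sub_pos.2 (soundSpeed_lt_one hG₁ hG₂ hr hp)
  have hd := one_add_mul_pos (abs_soundSpeed_lt_one hG₁ hG₂ hr hp) hu
  have hu' := sub_pos.2 (abs_lt.1 hu).2
  have : 0 < 1 - sMax G r u p := by rw [one_sub_sMax hd.ne']; positivity
  linarith

lemma sMin_lt (hG₁ : 1 < G) (hG₂ : G ≤ 2) (hr : 0 < r) (hp : 0 < p) (hu : |u| < 1) :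
    sMin G r u p < u := by
  have := lt_sMax hG₁ hG₂ hr hp (u := -u) (by rwa [abs_neg])
  rw [sMin_eq_neg_sMax_neg]
  linarith

lemma neg_one_lt_sMin (hG₁ : 1 < G) (hG₂ : G ≤ 2) (hr : 0 < r) (hp : 0 < p) (hu : |u| < 1) :
    -1 < sMin G r u p := by
  have := sMax_lt_one hG₁ hG₂ hr hp (u := -u) (by rwa [abs_neg])
  rw [sMin_eq_neg_sMax_neg]
  linarith

lemma pressure_lt_inertia_mul_sMax_sub (hG₁ : 1 < G) (hG₂ : G ≤ 2) (hr : 0 < r) (hp : 0 < p)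
    (hu : |u| < 1) : p < inertia G r u p * (sMax G r u p - u) := by
  set c := soundSpeed G r p
  have hc := soundSpeed_pos hG₁ hr hp
  have hd := one_add_mul_pos (abs_soundSpeed_lt_one hG₁ hG₂ hr hp) hu
  have hc1 : c * (1 + c * u) < G := by
    linarith [mul_lt_mul_of_pos_left (abs_lt.1 hu).2 (pow_pos hc 2),
      soundSpeed_lt_one hG₁ hG₂ hr hp, soundSpeed_sq_lt hG₁ hr hp]
  rw [sMax_sub hd.ne', mul_div_assoc', lt_div_iff₀ hd]
  refine lt_of_mul_lt_mul_left ?_ hc.le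
  calc c * (p * (1 + c * u)) = c * (1 + c * u) * p := by ring
    _ < G * p := mul_lt_mul_of_pos_right hc1 hp
    _ = c * (inertia G r u p * (c * (1 - u ^ 2))) := by
      rw [← soundSpeed_sq_mul hG₁ hr hp, ← inertia_mul_one_sub_sq hu]; ring

lemma pressure_lt_inertia_mul_sub_sMin (hG₁ : 1 < G) (hG₂ : G ≤ 2) (hr : 0 < r) (hp : 0 < p)
    (hu : |u| < 1) : p < inertia G r u p * (u - sMin G r u p) := by
  have := pressure_lt_inertia_mul_sMax_sub hG₁ hG₂ hr hp (u := -u) (by rwa [abs_neg])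
  rw [inertia_neg] at this
  rw [sMin_eq_neg_sMax_neg]
  convert this using 2
  ring

lemma sub_sMin_mul_sMax_sub (hc₁ : 1 - soundSpeed G r p * u ≠ 0)
    (hc₂ : 1 + soundSpeed G r p * u ≠ 0) :
    (u - sMin G r u p) * (sMax G r u p - u) * (1 + soundSpeed G r p ^ 2) =
      soundSpeed G r p ^ 2 * (1 - u ^ 2) * (1 - sMin G r u p * sMax G r u p) := by
  rw [sMin, sMax]
  generalize soundSpeed G r p = c at *
  rw [sub_div' hc₁, div_sub' hc₂, div_mul_div_comm, div_mul_div_comm,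
    one_sub_div (mul_ne_zero hc₁ hc₂), div_mul_eq_mul_div, mul_div_assoc']
  congr 1
  ring

lemma pressure_mul_one_sub_sMin_mul_sMax_lt (hG₁ : 1 < G) (hG₂ : G ≤ 2) (hr : 0 < r) (hp : 0 < p)
    (hu : |u| < 1) :
    p * (1 - sMin G r u p * sMax G r u p) <
      inertia G r u p * (u - sMin G r u p) * (sMax G r u p - u) := by
  set c := soundSpeed G r p
  have hc := abs_soundSpeed_lt_one hG₁ hG₂ hr hp
  have hd₁ := (one_sub_mul_pos hc hu).ne'
  have hd₂ := (one_add_mul_pos hc hu).ne'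
  have hmin := neg_one_lt_sMin hG₁ hG₂ hr hp hu
  have hmax := sMax_lt_one hG₁ hG₂ hr hp hu
  have hmid := (sMin_lt hG₁ hG₂ hr hp hu).trans (lt_sMax hG₁ hG₂ hr hp hu)
  have hfan := one_sub_mul_pos (abs_lt.2 ⟨hmin, hmid.trans hmax⟩) (abs_lt.2 ⟨hmin.trans hmid, hmax⟩)
  refine lt_of_mul_lt_mul_right (a := 1 + c ^ 2) ?_ (by positivity)
  calc p * (1 - sMin G r u p * sMax G r u p) * (1 + c ^ 2)
      < G * p * (1 - sMin G r u p * sMax G r u p) := by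
        linarith [mul_pos (sub_pos.2 (soundSpeed_sq_lt hG₁ hr hp)) (mul_pos hp hfan)]
    _ = inertia G r u p * (u - sMin G r u p) * (sMax G r u p - u) * (1 + c ^ 2) := by
      rw [← soundSpeed_sq_mul hG₁ hr hp, ← inertia_mul_one_sub_sq hu]
      linear_combination (-inertia G r u p) * sub_sMin_mul_sMax_sub hd₁ hd₂

variable {s t : ℝ}

lemma contactResidual_eq :
    contactResidual G r u p s t = inertia G r u p * (s - u) * (t - u) + p * (1 - s * t) := by
  unfold contactResidual Ec mc inertia
  ring

lemma contactResidual_comm : contactResidual G r u p s t = contactResidual G r u p t s := by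
  rw [contactResidual_eq, contactResidual_eq]
  ring

lemma contactResidual_pos (hG : 1 < G) (hr : 0 < r) (hp : 0 < p) (hu : |u| < 1)
    (hs : |s| < 1) (ht : |t| < 1) (hst : 0 < (s - u) * (t - u)) :
    0 < contactResidual G r u p s t := by
  rw [contactResidual_eq, mul_assoc]
  exact add_pos (mul_pos (inertia_pos hG hr hp hu) hst) (mul_pos hp (one_sub_mul_pos hs ht))

lemma contactResidual_neg (hG₁ : 1 < G) (hG₂ : G ≤ 2) (hr : 0 < r) (hp : 0 < p)
    (hu : |u| < 1) (hs : s ≤ sMin G r u p) (ht : sMax G r u p ≤ t) (ht₁ : t ≤ 1) :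
    contactResidual G r u p s t < 0 := by
  set W := inertia G r u p
  set a := sMin G r u p
  set b := sMax G r u p
  have hW := inertia_pos hG₁ hr hp hu
  have hsplit : contactResidual G r u p s t = contactResidual G r u p a b
      - (a - s) * (W * (t - u) - p * t) - (t - b) * (W * (u - a) + p * a) := by
    rw [contactResidual_eq, contactResidual_eq]
    ring
  have hfan : contactResidual G r u p a b < 0 := by
    rw [contactResidual_eq]
    linarith [pressure_mul_one_sub_sMin_mul_sMax_lt hG₁ hG₂ hr hp hu]
  have hright : 0 ≤ W * (t - u) - p * t := by
    linarith [pressure_lt_inertia_mul_sMax_sub hG₁ hG₂ hr hp hu,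
      mul_nonneg hW.le (sub_nonneg.2 ht), mul_nonneg hp.le (sub_nonneg.2 ht₁)]
  have hleft : 0 ≤ W * (u - a) + p * a := by
    linarith [pressure_lt_inertia_mul_sub_sMin hG₁ hG₂ hr hp hu,
      mul_pos hp (neg_lt_iff_pos_add'.1 (neg_one_lt_sMin hG₁ hG₂ hr hp hu))]
  rw [hsplit]
  linarith [mul_nonneg (sub_nonneg.2 hs) hright, mul_nonneg (sub_nonneg.2 ht) hleft]

end

theorem hllc_contact_speed_bounds (G r1 u1 p1 r2 u2 p2 sm sp A1 A2 B1 B2 sstar : ℝ)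
    (hG1 : 1 < G) (hG2 : G ≤ 2)
    (hr1 : 0 < r1) (hu1 : |u1| < 1) (hp1 : 0 < p1)
    (hr2 : 0 < r2) (hu2 : |u2| < 1) (hp2 : 0 < p2)
    (hsm : sm = min (sMin G r1 u1 p1) (sMin G r2 u2 p2))
    (hsp : sp = max (sMax G r1 u1 p1) (sMax G r2 u2 p2))
    (hA1 : A1 = sm * Ec G r1 u1 p1 - mc G r1 u1 p1)
    (hA2 : A2 = sp * Ec G r2 u2 p2 - mc G r2 u2 p2)
    (hB1 : B1 = mc G r1 u1 p1 * (sm - u1) - p1)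
    (hB2 : B2 = mc G r2 u2 p2 * (sp - u2) - p2)
    (hs1 : -1 < sstar) (hs2 : sstar < 1)
    (hrel : (1 - sp * sstar) * (sstar * A1 - B1) = (1 - sm * sstar) * (sstar * A2 - B2))
    :
    sm < sstar ∧ sstar < sp := by
  have hsm₁ : sm ≤ sMin G r1 u1 p1 := hsm ▸ min_le_left _ _
  have hsm₂ : sm ≤ sMin G r2 u2 p2 := hsm ▸ min_le_right _ _
  have hsp₁ : sMax G r1 u1 p1 ≤ sp := hsp ▸ le_max_left _ _
  have hsp₂ : sMax G r2 u2 p2 ≤ sp := hsp ▸ le_max_right _ _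
  have hsm_u1 : sm < u1 := hsm₁.trans_lt (sMin_lt hG1 hG2 hr1 hp1 hu1)
  have hu2_sp : u2 < sp := (lt_sMax hG1 hG2 hr2 hp2 hu2).trans_le hsp₂
  have hsp_lt : sp < 1 := hsp ▸ max_lt (sMax_lt_one hG1 hG2 hr1 hp1 hu1)
    (sMax_lt_one hG1 hG2 hr2 hp2 hu2)
  have hsm_abs : |sm| < 1 := abs_lt.2 ⟨hsm ▸ lt_min (neg_one_lt_sMin hG1 hG2 hr1 hp1 hu1)
    (neg_one_lt_sMin hG1 hG2 hr2 hp2 hu2), by linarith [(abs_lt.1 hu1).2]⟩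
  have hsp_abs : |sp| < 1 := abs_lt.2 ⟨by linarith [(abs_lt.1 hu2).1], hsp_lt⟩
  have hs_abs : |sstar| < 1 := abs_lt.2 ⟨hs1, hs2⟩
  have hsp_s := one_sub_mul_pos hsp_abs hs_abs
  have hsm_s := one_sub_mul_pos hsm_abs hs_abs
  have hres : (1 - sp * sstar) * contactResidual G r1 u1 p1 sm sstar =
      (1 - sm * sstar) * contactResidual G r2 u2 p2 sp sstar := by
    subst hA1 hA2 hB1 hB2; exact hrel
  constructor
  · by_contra! hle
    have h₁ := contactResidual_pos hG1 hr1 hp1 hu1 hsm_abs hs_abs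
      (mul_pos_of_neg_of_neg (by linarith) (by linarith))
    have h₂ := contactResidual_comm (s := sp) ▸
      contactResidual_neg hG1 hG2 hr2 hp2 hu2 (hle.trans hsm₂) hsp₂ hsp_lt.le
    linarith [mul_pos hsp_s h₁, mul_neg_of_pos_of_neg hsm_s h₂]
  · by_contra! hle
    have h₁ := contactResidual_neg hG1 hG2 hr1 hp1 hu1 hsm₁ (hsp₁.trans hle) hs2.le
    have h₂ := contactResidual_pos hG1 hr2 hp2 hu2 hsp_abs hs_abs
      (mul_pos (by linarith) (by linarith))
    linarith [mul_neg_of_pos_of_neg hsp_s h₁, mul_pos hsm_s h₂]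

end SRHD1D
end
end

section
/- (Lemma 3.1(vii)) Given two admissible 2D primitive states U⁻ and U⁺ (resolved along a common normal direction) with the HLLC wave speeds s⁻ = min(s_min(U⁻), s_min(U⁺)) and s⁺ = max(s_max(U⁻), s_max(U⁺)), one has (A⁻)² - (B⁻)² - (D⁻)²(s⁻ - u_n⁻)² - (m_τ⁻)²(s⁻ - u_n⁻)² > 0 and (A⁺)² - (B⁺)² - (D⁺)²(s⁺ - u_n⁺)² - (m_τ⁺)²(s⁺ - u_n⁺)² > 0. -/
noncomputable section

namespace SRHD2D

/-- Lorentz factor `γ = (1 - u_n² - u_τ²)^(-1/2)`. -/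
def lorentz (un ut : ℝ) : ℝ := 1 / Real.sqrt (1 - un ^ 2 - ut ^ 2)

/-- Specific enthalpy `h = 1 + Γ p / ((Γ - 1) ρ)` of a perfect gas. -/
def enthalpy (G r p : ℝ) : ℝ := 1 + G * p / ((G - 1) * r)

/-- Sound speed `c_s = √(Γ p / (ρ h))`. -/
def soundSpeed (G r p : ℝ) : ℝ := Real.sqrt (G * p / (r * enthalpy G r p))

/-- Conserved rest-mass density `D = ρ γ`. -/
def Dc (r un ut : ℝ) : ℝ := r * lorentz un ut

/-- Normal momentum `m_n = ρ h γ² u_n`. -/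
def mn (G r un ut p : ℝ) : ℝ := r * enthalpy G r p * lorentz un ut ^ 2 * un

/-- Tangential momentum `m_τ = ρ h γ² u_τ`. -/
def mt (G r un ut p : ℝ) : ℝ := r * enthalpy G r p * lorentz un ut ^ 2 * ut

/-- Conserved total energy `E = ρ h γ² - p`. -/
def Ec (G r un ut p : ℝ) : ℝ := r * enthalpy G r p * lorentz un ut ^ 2 - p

/-- `σ_s = c_s² / (γ² (1 - c_s²))`. -/
def sigmaS (G r un ut p : ℝ) : ℝ :=
  soundSpeed G r p ^ 2 / (lorentz un ut ^ 2 * (1 - soundSpeed G r p ^ 2))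

/-- Minimum normal characteristic speed. -/
def sMin (G r un ut p : ℝ) : ℝ :=
  (un - Real.sqrt (sigmaS G r un ut p * (1 - un ^ 2 + sigmaS G r un ut p))) /
    (1 + sigmaS G r un ut p)

/-- Maximum normal characteristic speed. -/
def sMax (G r un ut p : ℝ) : ℝ :=
  (un + Real.sqrt (sigmaS G r un ut p * (1 - un ^ 2 + sigmaS G r un ut p))) /
    (1 + sigmaS G r un ut p)

/-!
With `t = s - u_n` one has `s E - m_n = t E - u_n p`, so `K(s)` is the quadratic
`P t² + 2 u_n p² t - p² (1 - u_n²)` with `P = E² - m_n² - m_τ² - D²`. For a perfect gas with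
`Γ ≤ 2` the sound speed is subluminal, and this yields `p² < σ_s (P - p²)`. Then
`σ_s K(s) = p² χ(s) + (σ_s (P - p²) - p²) t²`, where
`(1 + σ_s) χ(s) = ((1 + σ_s) s - u_n)² - σ_s (1 - u_n² + σ_s)` vanishes exactly at `s_min` and
`s_max`. The HLLC speeds lie outside `(s_min, s_max)` of each state, where `χ ≥ 0`, and `t ≠ 0`
there because `χ(u_n) < 0`.
-/

def hllcK (E Mn Mt D p u s : ℝ) : ℝ :=
  (s * E - Mn) ^ 2 - (Mn * (s - u) - p) ^ 2 - D ^ 2 * (s - u) ^ 2 - Mt ^ 2 * (s - u) ^ 2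

lemma hllcK_eq {E Mn Mt D p u : ℝ} (hM : Mn = (E + p) * u) (s : ℝ) :
    hllcK E Mn Mt D p u s
      = (E ^ 2 - Mn ^ 2 - Mt ^ 2 - D ^ 2) * (s - u) ^ 2 + 2 * u * p ^ 2 * (s - u)
        - p ^ 2 * (1 - u ^ 2) := by
  subst hM
  unfold hllcK
  ring

lemma quadratic_pos_of_characteristic {σ u s P q : ℝ} (hσ : 0 < σ) (hu : u ^ 2 < 1)
    (hq : 0 < q) (hP : q < σ * (P - q)) (hs : σ * (1 - u ^ 2 + σ) ≤ ((1 + σ) * s - u) ^ 2) :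
    0 < P * (s - u) ^ 2 + 2 * u * q * (s - u) - q * (1 - u ^ 2) := by
  have hsu : 0 < (s - u) ^ 2 := by
    have : s - u ≠ 0 := by
      intro h
      rw [show s = u by linarith] at hs
      nlinarith [mul_pos (mul_pos hσ (by linarith : 0 < 1 + σ)) (by linarith : 0 < 1 - u ^ 2)]
    positivity
  have hchar : 0 ≤ (1 + σ) * (s - u) ^ 2 + 2 * σ * u * (s - u) - σ * (1 - u ^ 2) := by
    have : (1 + σ) * ((1 + σ) * (s - u) ^ 2 + 2 * σ * u * (s - u) - σ * (1 - u ^ 2))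
        = ((1 + σ) * s - u) ^ 2 - σ * (1 - u ^ 2 + σ) := by ring
    nlinarith
  have hsplit : σ * (P * (s - u) ^ 2 + 2 * u * q * (s - u) - q * (1 - u ^ 2))
      = q * ((1 + σ) * (s - u) ^ 2 + 2 * σ * u * (s - u) - σ * (1 - u ^ 2))
        + (σ * (P - q) - q) * (s - u) ^ 2 := by ring
  refine pos_of_mul_pos_right (a := σ) ?_ hσ.le
  rw [hsplit]
  have := mul_pos (sub_pos.2 hP) hsu
  positivity

lemma le_sq_of_le_sub_sqrt_div {d k u s : ℝ} (hk : 0 < k) (hs : s ≤ (u - √d) / k) :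
    d ≤ (k * s - u) ^ 2 := by
  rw [le_div_iff₀ hk] at hs
  rw [← neg_sub, neg_sq]
  exact (Real.sqrt_le_iff.1 (by linarith)).2

lemma le_sq_of_add_sqrt_div_le {d k u s : ℝ} (hk : 0 < k) (hs : (u + √d) / k ≤ s) :
    d ≤ (k * s - u) ^ 2 := by
  rw [div_le_iff₀ hk] at hs
  exact (Real.sqrt_le_iff.1 (by linarith)).2

section State

variable {G r p un ut : ℝ}

lemma lorentz_pos (hu : un ^ 2 + ut ^ 2 < 1) : 0 < lorentz un ut :=
  one_div_pos.2 (Real.sqrt_pos.2 (by linarith))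

lemma lorentz_sq_mul (hu : un ^ 2 + ut ^ 2 < 1) :
    lorentz un ut ^ 2 * (1 - un ^ 2 - ut ^ 2) = 1 := by
  rw [lorentz, div_pow, Real.sq_sqrt (by linarith)]
  field_simp [show 1 - un ^ 2 - ut ^ 2 ≠ 0 by linarith]

lemma mul_enthalpy_sub_one (hG : 1 < G) (hr : 0 < r) :
    (G - 1) * r * (enthalpy G r p - 1) = G * p := by
  unfold enthalpy
  field_simp [(sub_pos.2 hG).ne', hr.ne']
  ring

lemma one_lt_enthalpy (hG : 1 < G) (hr : 0 < r) (hp : 0 < p) : 1 < enthalpy G r p := by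
  have := sub_pos.2 hG
  have : 0 < G * p / ((G - 1) * r) := by positivity
  unfold enthalpy
  linarith

lemma soundSpeed_sq (hG : 1 < G) (hr : 0 < r) (hp : 0 < p) :
    soundSpeed G r p ^ 2 = G * p / (r * enthalpy G r p) := by
  have := one_lt_enthalpy hG hr hp
  rw [soundSpeed, Real.sq_sqrt (by positivity)]

lemma soundSpeed_sq_pos (hG : 1 < G) (hr : 0 < r) (hp : 0 < p) : 0 < soundSpeed G r p ^ 2 := by
  have := one_lt_enthalpy hG hr hp
  rw [soundSpeed_sq hG hr hp]
  positivity

lemma soundSpeed_sq_lt_one (hG1 : 1 < G) (hG2 : G ≤ 2) (hr : 0 < r) (hp : 0 < p) :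
    soundSpeed G r p ^ 2 < 1 := by
  have hh := one_lt_enthalpy hG1 hr hp
  have := mul_enthalpy_sub_one (p := p) hG1 hr
  rw [soundSpeed_sq hG1 hr hp, div_lt_one (by positivity)]
  nlinarith [mul_pos hr (sub_pos.2 hG1),
    mul_nonneg (mul_nonneg hr.le (sub_nonneg.2 hG2)) (zero_le_one.trans hh.le)]

lemma sigmaS_pos (hG1 : 1 < G) (hG2 : G ≤ 2) (hr : 0 < r) (hp : 0 < p)
    (hu : un ^ 2 + ut ^ 2 < 1) : 0 < sigmaS G r un ut p := by
  have := soundSpeed_sq_pos hG1 hr hp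
  have := sub_pos.2 (soundSpeed_sq_lt_one hG1 hG2 hr hp)
  have := lorentz_pos hu
  unfold sigmaS
  positivity

lemma sigmaS_mul_lorentz_sq (hu : un ^ 2 + ut ^ 2 < 1) :
    sigmaS G r un ut p * lorentz un ut ^ 2
      = soundSpeed G r p ^ 2 / (1 - soundSpeed G r p ^ 2) := by
  have := (lorentz_pos hu).ne'
  rw [sigmaS]
  field_simp

lemma Ec_sq_sub_mn_sq_sub_mt_sq_sub_Dc_sq_sub_sq (hu : un ^ 2 + ut ^ 2 < 1) :
    Ec G r un ut p ^ 2 - mn G r un ut p ^ 2 - mt G r un ut p ^ 2 - Dc r un ut ^ 2 - p ^ 2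
      = lorentz un ut ^ 2 * r * (r * (enthalpy G r p ^ 2 - 1) - 2 * enthalpy G r p * p) := by
  simp only [Ec, mn, mt, Dc]
  linear_combination (r * enthalpy G r p) ^ 2 * lorentz un ut ^ 2 * lorentz_sq_mul hu

lemma sq_lt_sigmaS_mul (hG1 : 1 < G) (hG2 : G ≤ 2) (hr : 0 < r) (hp : 0 < p)
    (hu : un ^ 2 + ut ^ 2 < 1) :
    p ^ 2 < sigmaS G r un ut p *
      (Ec G r un ut p ^ 2 - mn G r un ut p ^ 2 - mt G r un ut p ^ 2 - Dc r un ut ^ 2 - p ^ 2) := by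
  have hh := one_lt_enthalpy hG1 hr hp
  have hc := soundSpeed_sq_lt_one hG1 hG2 hr hp
  rw [soundSpeed_sq hG1 hr hp] at hc
  have hrh : 0 < r * enthalpy G r p - G * p := by
    have := (div_lt_one (by positivity)).1 hc
    linarith
  have hσP : sigmaS G r un ut p *
      (Ec G r un ut p ^ 2 - mn G r un ut p ^ 2 - mt G r un ut p ^ 2 - Dc r un ut ^ 2 - p ^ 2)
      = G * p * r * (r * (enthalpy G r p ^ 2 - 1) - 2 * enthalpy G r p * p)
        / (r * enthalpy G r p - G * p) := by
    rw [Ec_sq_sub_mn_sq_sub_mt_sq_sub_Dc_sq_sub_sq hu, ← mul_assoc, ← mul_assoc,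
      sigmaS_mul_lorentz_sq hu, soundSpeed_sq hG1 hr hp]
    field_simp
  have hGp := mul_enthalpy_sub_one (p := p) hG1 hr
  set h := enthalpy G r p
  have hgap : G * (G * p * r * (r * (h ^ 2 - 1) - 2 * h * p) - p ^ 2 * (r * h - G * p))
      = p * r ^ 2 * (h - 1) * (2 * G - 1 + h * (2 - G)) := by
    linear_combination (-p * (G * p + (G - 1) * r * (h - 1) - (2 * G + 1) * r * h)) * hGp
  have : 0 < p * r ^ 2 * (h - 1) * (2 * G - 1 + h * (2 - G)) := by
    have : 0 < 2 * G - 1 + h * (2 - G) := by nlinarith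
    have := sub_pos.2 hh
    positivity
  rw [hσP, lt_div_iff₀ hrh]
  nlinarith

lemma hllcK_pos {s : ℝ} (hG1 : 1 < G) (hG2 : G ≤ 2) (hr : 0 < r) (hp : 0 < p)
    (hu : un ^ 2 + ut ^ 2 < 1) (hs : s ≤ sMin G r un ut p ∨ sMax G r un ut p ≤ s) :
    0 < hllcK (Ec G r un ut p) (mn G r un ut p) (mt G r un ut p) (Dc r un ut) p un s := by
  have hσ := sigmaS_pos hG1 hG2 hr hp hu
  have hchar : sigmaS G r un ut p * (1 - un ^ 2 + sigmaS G r un ut p)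
      ≤ ((1 + sigmaS G r un ut p) * s - un) ^ 2 :=
    hs.elim (le_sq_of_le_sub_sqrt_div (by linarith)) (le_sq_of_add_sqrt_div_le (by linarith))
  rw [hllcK_eq (by simp only [Ec, mn]; ring)]
  exact quadratic_pos_of_characteristic hσ (by nlinarith [sq_nonneg ut]) (by positivity)
    (sq_lt_sigmaS_mul hG1 hG2 hr hp hu) hchar

end State

theorem hllc2d_K_pos (G r1 un1 ut1 p1 r2 un2 ut2 p2 sm sp A1 A2 B1 B2 : ℝ)
    (hG1 : 1 < G) (hG2 : G ≤ 2)
    (hr1 : 0 < r1) (hu1 : un1 ^ 2 + ut1 ^ 2 < 1) (hp1 : 0 < p1)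
    (hr2 : 0 < r2) (hu2 : un2 ^ 2 + ut2 ^ 2 < 1) (hp2 : 0 < p2)
    (hsm : sm = min (sMin G r1 un1 ut1 p1) (sMin G r2 un2 ut2 p2))
    (hsp : sp = max (sMax G r1 un1 ut1 p1) (sMax G r2 un2 ut2 p2))
    (hA1 : A1 = sm * Ec G r1 un1 ut1 p1 - mn G r1 un1 ut1 p1)
    (hA2 : A2 = sp * Ec G r2 un2 ut2 p2 - mn G r2 un2 ut2 p2)
    (hB1 : B1 = mn G r1 un1 ut1 p1 * (sm - un1) - p1)
    (hB2 : B2 = mn G r2 un2 ut2 p2 * (sp - un2) - p2)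
    :
    0 < A1 ^ 2 - B1 ^ 2 - Dc r1 un1 ut1 ^ 2 * (sm - un1) ^ 2 - mt G r1 un1 ut1 p1 ^ 2 * (sm - un1) ^ 2 ∧ 0 < A2 ^ 2 - B2 ^ 2 - Dc r2 un2 ut2 ^ 2 * (sp - un2) ^ 2 - mt G r2 un2 ut2 p2 ^ 2 * (sp - un2) ^ 2 := by
  subst hsm hsp hA1 hA2 hB1 hB2
  exact ⟨hllcK_pos hG1 hG2 hr1 hp1 hu1 (.inl (min_le_left _ _)),
    hllcK_pos hG1 hG2 hr2 hp2 hu2 (.inr (le_max_right _ _))⟩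

end SRHD2D
end
end
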